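/- Let P be the uniform (Lebesgue) measure on D = [0,1] and let k(x,x') = min{x,x'} be the Brownian motion covariance. Let 0 < x_1 < ⋯ < x_{N−1} < x_N = 1 and set x_0 = 0. Then the Gram matrix K_XX = (min{x_i,x_j})_{i,j=1}^N is positive definite and the Bayesian quadrature integral variance satisfies Σ_D = k_PP − k_PXᵀ K_XX⁻¹ k_PX = (1/12) Σ_{i=1}^N (x_i − x_{i−1})³. -/

import Mathlib

open MeasureTheory Matrix

section BQAux
open intervalIntegral
variable {N : ℕ} (x : ℕ → ℝ)

private lemma integral_min_aux (a : ℝ) (h0 : 0 ≤ a) (h1 : a ≤ 1) :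
    ∫ t in Set.Icc (0:ℝ) 1, min t a = a - a^2/2 := by
  rw [MeasureTheory.integral_Icc_eq_integral_Ioc,
      ← intervalIntegral.integral_of_le (zero_le_one)]
  have hint : ∀ b c : ℝ, IntervalIntegrable (fun t => min t a) volume b c :=
    fun b c => (continuous_id.min continuous_const).intervalIntegrable b c
  rw [← intervalIntegral.integral_add_adjacent_intervals (a := 0) (b := a) (c := 1)
      (hint 0 a) (hint a 1)]
  have e1 : ∫ t in (0:ℝ)..a, min t a = ∫ t in (0:ℝ)..a, t := by
    apply intervalIntegral.integral_congr
    intro t ht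
    rw [Set.uIcc_of_le h0] at ht
    exact min_eq_left ht.2
  have e2 : ∫ t in a..(1:ℝ), min t a = ∫ t in a..(1:ℝ), a := by
    apply intervalIntegral.integral_congr
    intro t ht
    rw [Set.uIcc_of_le h1] at ht
    exact min_eq_right ht.1
  rw [e1, e2, integral_id, intervalIntegral.integral_const]
  simp; ring

private lemma double_integral_min :
    (∫ s in Set.Icc (0:ℝ) 1, ∫ t in Set.Icc (0:ℝ) 1, min s t) = 1/3 := by
  have h1 : ∀ s ∈ Set.Icc (0:ℝ) 1, (∫ t in Set.Icc (0:ℝ) 1, min s t) = s - s^2/2 := by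
    intro s hs
    have : (fun t => min s t) = fun t => min t s := funext fun t => min_comm s t
    rw [this, integral_min_aux s hs.1 hs.2]
  rw [MeasureTheory.setIntegral_congr_fun measurableSet_Icc h1,
      MeasureTheory.integral_Icc_eq_integral_Ioc,
      ← intervalIntegral.integral_of_le (zero_le_one)]
  have hi1 : IntervalIntegrable (fun s : ℝ => s) volume 0 1 :=
    continuous_id.intervalIntegrable 0 1
  have hi2 : IntervalIntegrable (fun s : ℝ => s^2/2) volume 0 1 :=
    ((continuous_pow 2).div_const 2).intervalIntegrable 0 1
  rw [intervalIntegral.integral_sub hi1 hi2, intervalIntegral.integral_div, integral_id,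
      integral_pow]
  norm_num

private lemma entry_decomp (hx0 : x 0 = 0) (hxm : ∀ i j : ℕ, i ≤ j → j ≤ N → x i ≤ x j)
    (i j : Fin N) :
    min (x (i.1 + 1)) (x (j.1 + 1)) =
      ∑ k ∈ Finset.range N, (if k ≤ i.1 then (1:ℝ) else 0) * (if k ≤ j.1 then 1 else 0)
        * (x (k+1) - x k) := by
  have helper : ∀ m n : ℕ, m < N → m ≤ n →
      ∑ k ∈ Finset.range N, (if k ≤ m then (1:ℝ) else 0) * (if k ≤ n then 1 else 0)
        * (x (k+1) - x k) = x (m+1) := by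
    intro m n hm hmn
    have hsub : Finset.range (m+1) ⊆ Finset.range N := Finset.range_subset_range.2 (by omega)
    rw [← Finset.sum_subset hsub (by
      intro k _ hk
      simp only [Finset.mem_range] at hk
      have : ¬ k ≤ m := by omega
      simp [this])]
    have : ∀ k ∈ Finset.range (m+1),
        (if k ≤ m then (1:ℝ) else 0) * (if k ≤ n then 1 else 0) * (x (k+1) - x k)
          = x (k+1) - x k := by
      intro k hk
      simp only [Finset.mem_range] at hk
      have h1 : k ≤ m := by omega
      have h2 : k ≤ n := by omega
      simp [h1, h2]
    rw [Finset.sum_congr rfl this, Finset.sum_range_sub, hx0, sub_zero]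
  rcases le_total i.1 j.1 with h | h
  · rw [min_eq_left (hxm _ _ (by omega) (by omega)), helper i.1 j.1 i.2 h]
  · rw [min_eq_right (hxm _ _ (by omega) (by omega)), ← helper j.1 i.1 j.2 h]
    apply Finset.sum_congr rfl
    intro k _
    ring

/-- Quadratic form identity. -/

private lemma quad_form (w : Fin N → ℝ) :
    ∑ i, w i * ∑ j, (∑ k ∈ Finset.range N,
        (if k ≤ i.1 then (1:ℝ) else 0) * (if k ≤ j.1 then 1 else 0) * (x (k+1) - x k)) * w j
      = ∑ k ∈ Finset.range N, (x (k+1) - x k)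
          * (∑ i, (if k ≤ i.1 then (1:ℝ) else 0) * w i)^2 := by
  have step1 : ∀ i : Fin N, w i * ∑ j, (∑ k ∈ Finset.range N,
        (if k ≤ i.1 then (1:ℝ) else 0) * (if k ≤ j.1 then 1 else 0) * (x (k+1) - x k)) * w j
      = ∑ k ∈ Finset.range N, ∑ j, w i * ((if k ≤ i.1 then (1:ℝ) else 0)
          * (if k ≤ j.1 then 1 else 0) * (x (k+1) - x k)) * w j := by
    intro i
    rw [Finset.mul_sum, Finset.sum_comm]
    apply Finset.sum_congr rfl
    intro j _
    rw [Finset.sum_mul, Finset.mul_sum]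
    apply Finset.sum_congr rfl
    intro k _
    ring
  rw [Finset.sum_congr rfl (fun i _ => step1 i), Finset.sum_comm]
  apply Finset.sum_congr rfl
  intro k _
  rw [pow_two, Finset.sum_mul_sum, Finset.mul_sum]
  apply Finset.sum_congr rfl
  intro i _
  rw [Finset.mul_sum]
  apply Finset.sum_congr rfl
  intro j _
  ring

private lemma min_posDef (hx0 : x 0 = 0) (hmono : ∀ i < N, x i < x (i+1))
    (hxm : ∀ i j : ℕ, i ≤ j → j ≤ N → x i ≤ x j) :
    (Matrix.of fun i j : Fin N => min (x (i.1 + 1)) (x (j.1 + 1))).PosDef := by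
  rw [Matrix.posDef_iff_dotProduct_mulVec]
  constructor
  · ext i j
    simp [Matrix.conjTranspose_apply, min_comm]
  · intro w hw
    have e0 : star w ⬝ᵥ (Matrix.of fun i j : Fin N =>
        min (x (i.1 + 1)) (x (j.1 + 1))).mulVec w
        = ∑ i, w i * ∑ j, min (x (i.1 + 1)) (x (j.1 + 1)) * w j := by
      simp [dotProduct, Matrix.mulVec, star]
    rw [e0]
    have e1 : ∑ i, w i * ∑ j, min (x (i.1 + 1)) (x (j.1 + 1)) * w j
        = ∑ i, w i * ∑ j, (∑ k ∈ Finset.range N,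
            (if k ≤ i.1 then (1:ℝ) else 0) * (if k ≤ j.1 then 1 else 0) * (x (k+1) - x k))
              * w j := by
      apply Finset.sum_congr rfl
      intro i _
      congr 1
      apply Finset.sum_congr rfl
      intro j _
      rw [entry_decomp x hx0 hxm i j]
    rw [e1, quad_form x w]
    have hS : (Finset.univ.filter (fun i => w i ≠ 0)).Nonempty := by
      rcases Function.ne_iff.1 hw with ⟨i, hi⟩
      exact ⟨i, Finset.mem_filter.2 ⟨Finset.mem_univ i, by simpa using hi⟩⟩
    set i₀ := Finset.max' _ hS with hi₀
    have hmax : ∀ b : Fin N, i₀ < b → w b = 0 := by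
      intro b hb
      by_contra h
      exact absurd (Finset.le_max' _ b (by simp [h])) (not_le.2 hb)
    have hw0 : w i₀ ≠ 0 := by
      have := Finset.max'_mem _ hS
      simpa using this
    have hU : ∑ i, (if i₀.1 ≤ i.1 then (1:ℝ) else 0) * w i = w i₀ := by
      rw [Finset.sum_eq_single i₀]
      · simp
      · intro b _ hb
        rcases lt_or_ge b i₀ with h | h
        · have : ¬ i₀.1 ≤ b.1 := not_le.2 h
          simp [this]
        · have hlt : i₀ < b := lt_of_le_of_ne h (Ne.symm hb)
          simp [hmax b hlt]
      · simp
    apply Finset.sum_pos'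
    · intro k hk
      have := hmono k (Finset.mem_range.1 hk)
      have h2 := sq_nonneg (∑ i, (if k ≤ i.1 then (1:ℝ) else 0) * w i)
      nlinarith
    · refine ⟨i₀.1, Finset.mem_range.2 i₀.2, ?_⟩
      rw [hU]
      have h1 := hmono i₀.1 i₀.2
      have h2 : 0 < (w i₀)^2 :=
        lt_of_le_of_ne (sq_nonneg _) (Ne.symm (pow_ne_zero 2 hw0))
      nlinarith

private lemma T_val (hN : 0 < N) (hxN : x N = 1) (k : ℕ) (hk : k < N) :
    ∑ i : Fin N, (if k ≤ i.1 then (1:ℝ) else 0) * ((x (min (i.1+2) N) - x i.1)/2)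
      = (2 - x k - x (k+1))/2 := by
  rw [Fin.sum_univ_eq_sum_range
    (fun j => (if k ≤ j then (1:ℝ) else 0) * ((x (min (j+2) N) - x j)/2)) N]
  have h1 : ∀ j ∈ Finset.range N,
      (if k ≤ j then (1:ℝ) else 0) * ((x (min (j+2) N) - x j)/2)
        = if k ≤ j then ((x (min (j+2) N) - x j)/2) else 0 := by
    intro j _
    split <;> simp
  rw [Finset.sum_congr rfl h1, ← Finset.sum_filter]
  have hfilter : (Finset.range N).filter (fun j => k ≤ j) = Finset.Ico k N := by
    ext j
    simp [Finset.mem_filter, Finset.mem_Ico, and_comm]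
  rw [hfilter]
  have h2 : ∀ j ∈ Finset.Ico k N,
      (x (min (j+2) N) - x j)/2
        = ((x (min (j+1+1) N) - x (min (j+1) N)) + ((x (min (j+1) N)) - x (min j N)))/2 := by
    intro j hj
    simp only [Finset.mem_Ico] at hj
    rw [show min j N = j from min_eq_left (by omega)]
    ring_nf
  rw [Finset.sum_congr rfl h2]
  have h3 : ∑ j ∈ Finset.Ico k N,
      ((x (min (j+1+1) N) - x (min (j+1) N)) + ((x (min (j+1) N)) - x (min j N)))/2
      = ((∑ j ∈ Finset.Ico k N, (x (min (j+1+1) N) - x (min (j+1) N)))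
        + (∑ j ∈ Finset.Ico k N, ((x (min (j+1) N)) - x (min j N))))/2 := by
    rw [← Finset.sum_add_distrib, ← Finset.sum_div]
  rw [h3, Finset.sum_Ico_eq_sub _ (le_of_lt hk), Finset.sum_Ico_eq_sub _ (le_of_lt hk),
      Finset.sum_range_sub (fun j => x (min (j+1) N)),
      Finset.sum_range_sub (fun j => x (min (j+1) N)),
      Finset.sum_range_sub (fun j => x (min j N)),
      Finset.sum_range_sub (fun j => x (min j N))]
  rw [show min (N+1) N = N by omega, show min N N = N from min_self N,
      show min (k+1) N = k+1 from min_eq_left (by omega),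
      show min k N = k from min_eq_left (by omega), hxN]
  ring

private lemma mulVec_v (hN : 0 < N) (hx0 : x 0 = 0) (hxN : x N = 1)
    (hxm : ∀ i j : ℕ, i ≤ j → j ≤ N → x i ≤ x j) :
    (Matrix.of fun i j : Fin N => min (x (i.1 + 1)) (x (j.1 + 1))).mulVec
        (fun i : Fin N => (x (min (i.1+2) N) - x i.1)/2)
      = fun i : Fin N => x (i.1+1) - (x (i.1+1))^2/2 := by
  funext i
  simp only [Matrix.mulVec, dotProduct, Matrix.of_apply]
  have e1 : ∀ j : Fin N, min (x (i.1 + 1)) (x (j.1 + 1)) * ((x (min (j.1+2) N) - x j.1)/2)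
      = ∑ k ∈ Finset.range N, (if k ≤ i.1 then (1:ℝ) else 0) * (x (k+1) - x k)
          * ((if k ≤ j.1 then (1:ℝ) else 0) * ((x (min (j.1+2) N) - x j.1)/2)) := by
    intro j
    rw [entry_decomp x hx0 hxm i j, Finset.sum_mul]
    apply Finset.sum_congr rfl
    intro k _
    ring
  rw [Finset.sum_congr rfl (fun j _ => e1 j), Finset.sum_comm]
  have e2 : ∀ k ∈ Finset.range N,
      ∑ j : Fin N, (if k ≤ i.1 then (1:ℝ) else 0) * (x (k+1) - x k)
          * ((if k ≤ j.1 then (1:ℝ) else 0) * ((x (min (j.1+2) N) - x j.1)/2))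
        = if k ≤ i.1 then ((x (k+1) - (x (k+1))^2/2) - (x k - (x k)^2/2)) else 0 := by
    intro k hk
    rw [← Finset.mul_sum, T_val x hN hxN k (Finset.mem_range.1 hk)]
    split <;> ring
  rw [Finset.sum_congr rfl e2]
  have hsub : Finset.range (i.1+1) ⊆ Finset.range N := Finset.range_subset_range.2 (by omega)
  rw [← Finset.sum_subset hsub (by
    intro k _ hk
    simp only [Finset.mem_range] at hk
    have : ¬ k ≤ i.1 := by omega
    simp [this])]
  have e3 : ∀ k ∈ Finset.range (i.1+1),
      (if k ≤ i.1 then ((x (k+1) - (x (k+1))^2/2) - (x k - (x k)^2/2)) else 0)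
        = (x (k+1) - (x (k+1))^2/2) - (x k - (x k)^2/2) := by
    intro k hk
    simp only [Finset.mem_range] at hk
    have : k ≤ i.1 := by omega
    simp [this]
  rw [Finset.sum_congr rfl e3, Finset.sum_range_sub (fun m => x m - (x m)^2/2)]
  rw [hx0]
  norm_num

private lemma dot_v (hN : 0 < N) (hx0 : x 0 = 0) (hxN : x N = 1) :
    (fun i : Fin N => x (i.1+1) - (x (i.1+1))^2/2) ⬝ᵥ
        (fun i : Fin N => (x (min (i.1+2) N) - x i.1)/2)
      = ∑ k ∈ Finset.range N,
          ((x (k+1) - (x (k+1))^2/2) + (x k - (x k)^2/2)) * (x (k+1) - x k)/2 := by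
  simp only [dotProduct]
  rw [Fin.sum_univ_eq_sum_range
    (fun j => (x (j+1) - (x (j+1))^2/2) * ((x (min (j+2) N) - x j)/2)) N]
  set g : ℕ → ℝ := fun m => (x m - (x m)^2/2) * ((x (min (m+1) N) - x (min m N))/2) with hg
  set h : ℕ → ℝ := fun j => (x (j+1) - (x (j+1))^2/2) * ((x (min (j+1) N) - x (min j N))/2)
    with hh
  have e1 : ∀ j ∈ Finset.range N,
      (x (j+1) - (x (j+1))^2/2) * ((x (min (j+2) N) - x j)/2) = g (j+1) + h j := by
    intro j hj
    simp only [Finset.mem_range] at hj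
    rw [hg, hh]
    simp only []
    rw [show min j N = j from min_eq_left (by omega)]
    ring
  rw [Finset.sum_congr rfl e1, Finset.sum_add_distrib]
  have e2 : ∑ j ∈ Finset.range N, g (j+1) = ∑ j ∈ Finset.range N, g j := by
    have := Finset.sum_range_succ' g N
    have hgN : g N = 0 := by
      rw [hg]; simp only []
      rw [show min (N+1) N = N by omega, min_self]
      ring
    have hg0 : g 0 = 0 := by
      rw [hg]; simp only [hx0]
      ring
    rw [Finset.sum_range_succ g N] at this
    linarith [this]
  rw [e2, ← Finset.sum_add_distrib]
  apply Finset.sum_congr rfl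
  intro j hj
  simp only [Finset.mem_range] at hj
  rw [hg, hh]
  simp only []
  rw [show min (j+1) N = j+1 from min_eq_left (by omega),
      show min j N = j from min_eq_left (by omega)]
  ring

private lemma final_alg (hx0 : x 0 = 0) (hxN : x N = 1) :
    1/3 - ∑ k ∈ Finset.range N,
        ((x (k+1) - (x (k+1))^2/2) + (x k - (x k)^2/2)) * (x (k+1) - x k)/2
      = 1/12 * ∑ i ∈ Finset.range N, (x (i + 1) - x i) ^ 3 := by
  have tele : ∑ k ∈ Finset.range N, (((x (k+1))^2/2 - (x (k+1))^3/6) - ((x k)^2/2 - (x k)^3/6))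
      = 1/3 := by
    rw [Finset.sum_range_sub (fun m => (x m)^2/2 - (x m)^3/6), hx0, hxN]
    norm_num
  rw [← tele, ← Finset.sum_sub_distrib, Finset.mul_sum]
  apply Finset.sum_congr rfl
  intro k _
  ring
end BQAux

/-- Let `P` be the uniform (Lebesgue) measure on `[0,1]` and
`k(x,x') = min{x,x'}` the Brownian motion covariance.  For nodes `0 = x_0 < x_1 < ⋯ < x_N = 1`,
the Gram matrix `(min{x_i,x_j})_{i,j=1}^N` is positive definite and the Bayesian quadrature
integral variance satisfies
`Σ_D = k_PP − k_PXᵀ K_XX⁻¹ k_PX = (1/12) Σ_{i=1}^N (x_i − x_{i−1})³`. -/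
theorem statement5
    {N : ℕ} (hN : 0 < N) (x : ℕ → ℝ) (hx0 : x 0 = 0)
    (hmono : ∀ i < N, x i < x (i + 1)) (hxN : x N = 1) :
    (Matrix.of fun i j : Fin N => min (x (i.1 + 1)) (x (j.1 + 1))).PosDef ∧
      (∫ s in Set.Icc (0:ℝ) 1, ∫ t in Set.Icc (0:ℝ) 1, min s t)
          - ((fun i : Fin N => ∫ t in Set.Icc (0:ℝ) 1, min t (x (i.1 + 1)))
              ⬝ᵥ ((Matrix.of fun i j : Fin N => min (x (i.1 + 1)) (x (j.1 + 1)))⁻¹).mulVec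
                (fun i : Fin N => ∫ t in Set.Icc (0:ℝ) 1, min t (x (i.1 + 1))))
        = 1 / 12 * ∑ i ∈ Finset.range N, (x (i + 1) - x i) ^ 3 := by
  have hxm : ∀ i j : ℕ, i ≤ j → j ≤ N → x i ≤ x j := by
    have key : ∀ d i : ℕ, i + d ≤ N → x i ≤ x (i + d) := by
      intro d
      induction d with
      | zero => intro i _; simp
      | succ d ih =>
        intro i h
        calc x i ≤ x (i + d) := ih i (by omega)
          _ ≤ x (i + d + 1) := le_of_lt (hmono _ (by omega))
    intro i j hij hj
    have := key (j - i) i (by omega)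
    rwa [show i + (j - i) = j by omega] at this
  have hPD := min_posDef x hx0 hmono hxm
  refine ⟨hPD, ?_⟩
  have hb : (fun i : Fin N => ∫ t in Set.Icc (0:ℝ) 1, min t (x (i.1 + 1)))
      = fun i : Fin N => x (i.1+1) - (x (i.1+1))^2/2 := by
    funext i
    have h0 : 0 ≤ x (i.1+1) := by
      rw [← hx0]; exact hxm 0 (i.1+1) (by omega) (by omega)
    have h1 : x (i.1+1) ≤ 1 := by
      rw [← hxN]; exact hxm (i.1+1) N (by omega) (le_refl N)
    exact integral_min_aux _ h0 h1
  have hdet : IsUnit (Matrix.of fun i j : Fin N =>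
      min (x (i.1 + 1)) (x (j.1 + 1))).det :=
    isUnit_iff_ne_zero.2 (ne_of_gt hPD.det_pos)
  have hinv : ((Matrix.of fun i j : Fin N =>
        min (x (i.1 + 1)) (x (j.1 + 1)))⁻¹).mulVec
        (fun i : Fin N => x (i.1+1) - (x (i.1+1))^2/2)
      = fun i : Fin N => (x (min (i.1+2) N) - x i.1)/2 := by
    rw [← mulVec_v x hN hx0 hxN hxm, Matrix.mulVec_mulVec,
        Matrix.nonsing_inv_mul _ hdet, Matrix.one_mulVec]
  rw [double_integral_min, hb, hinv, dot_v x hN hx0 hxN, final_alg x hx0 hxN]
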